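/- arXiv:0906.1629 — 2 statements merged into one kernel-verified Lean document; each statement's English description precedes it below -/
import Mathlib

section
/- The Demazure operator δ satisfies δ(1) = 1 and δ ∘ δ = δ, i.e. δ(δ(u)) = δ(u) for all u ∈ ℤ[M]. -/
open AddMonoidAlgebra

noncomputable section

/-- The reflection `λ ↦ λ - c(λ) • α` associated to a root `α` and coroot `c`,
as an additive homomorphism of the weight lattice `M`. -/
def demazureReflection {M : Type*} [AddCommGroup M] (α : M) (c : M →+ ℤ) : M →+ M where
  toFun := fun lam => lam - c lam • α
  map_zero' := by simp
  map_add' := fun x y => by simp only [map_add, add_smul]; abel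

/-- The ring endomorphism of the group algebra `ℤ[M]` induced by the reflection
`s(λ) = λ - c(λ)·α`; it sends `e^λ` to `e^{s(λ)}`. -/
def demazureReflectionAlg {M : Type*} [AddCommGroup M] (α : M) (c : M →+ ℤ) :
    AddMonoidAlgebra ℤ M →+* AddMonoidAlgebra ℤ M :=
  mapDomainRingHom ℤ (demazureReflection α c)

/-!
Write `E = e^{-α}`, so that `s(E) = e^{α} = E⁻¹`. Applying `s` to the defining relation
`(1 - E) v = u - E s(u)` and multiplying by `-E` gives `(1 - E) s(v) = (1 - E) v`; since `ℤ[M]` is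
a domain (a free `ℤ`-module has unique sums) and `E ≠ 1`, every value `v = δ u` is `s`-invariant.
For `s`-invariant `v` the relation reads `(1 - E) δ v = (1 - E) v`, so `δ v = v`; this applies to
`v = 1` and to `v = δ u`.
-/

theorem Module.Free.uniqueSums (R M : Type*) [Semiring R] [UniqueSums R] [AddCommMonoid M]
    [Module R M] [Module.Free R M] : UniqueSums M :=
  UniqueSums.of_injective_addHom (Module.Free.chooseBasis R M).repr.toAddMonoidHom.toAddHom
    (Module.Free.chooseBasis R M).repr.injective inferInstance

theorem single_ne_one {R M : Type*} [Semiring R] [Nontrivial R] [AddMonoid M] {m : M}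
    (hm : m ≠ 0) : (single m 1 : AddMonoidAlgebra R M) ≠ 1 := by
  rw [one_def, Ne, single_left_inj one_ne_zero]
  exact hm

section Reflection

variable {R : Type*} [CommRing R] [IsDomain R] {σ : R →+* R} {E : R}

theorem map_eq_self_of_one_sub_mul_eq (hσ : Function.Involutive σ)
    (hE : E * σ E = 1) (hE1 : E ≠ 1) {u v : R} (h : (1 - E) * v = u - E * σ u) : σ v = v := by
  have hσh : (1 - σ E) * σ v = σ u - σ E * u := by
    simpa only [map_mul, map_sub, map_one, hσ u] using congrArg σ h
  refine mul_left_cancel₀ (sub_ne_zero.2 hE1.symm) ?_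
  linear_combination (-E) * hσh - h + (u - σ v) * hE

theorem apply_eq_self_of_map_eq_self (δ : R → R) (hδ : ∀ u, (1 - E) * δ u = u - E * σ u)
    (hE1 : E ≠ 1) ⦃v : R⦄ (hv : σ v = v) : δ v = v :=
  mul_left_cancel₀ (sub_ne_zero.2 hE1.symm) (by rw [hδ v, hv]; ring)

end Reflection

section WeightLattice

variable {M : Type*} [AddCommGroup M] {α : M} {c : M →+ ℤ}

@[simp]
theorem demazureReflection_apply (lam : M) : demazureReflection α c lam = lam - c lam • α := rfl

theorem demazureReflection_involutive (hc : c α = 2) :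
    Function.Involutive (demazureReflection α c) := fun lam => by
  simp only [demazureReflection_apply, map_sub, map_zsmul, hc]
  module

@[simp]
theorem demazureReflectionAlg_single (lam : M) (r : ℤ) :
    demazureReflectionAlg α c (single lam r) = single (lam - c lam • α) r := by
  simp [demazureReflectionAlg, mapDomainRingHom]

theorem demazureReflectionAlg_involutive (hc : c α = 2) :
    Function.Involutive (demazureReflectionAlg α c) := fun u => by
  have hss : (demazureReflection α c).comp (demazureReflection α c) = .id M :=
    AddMonoidHom.ext (demazureReflection_involutive hc)
  rw [demazureReflectionAlg, ← RingHom.comp_apply, ← mapDomainRingHom_comp, hss,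
    mapDomainRingHom_id, RingHom.id_apply]

theorem single_neg_mul_demazureReflectionAlg_single_neg (hc : c α = 2) :
    single (-α) 1 * demazureReflectionAlg α c (single (-α) 1) = 1 := by
  rw [demazureReflectionAlg_single, single_mul_single, map_neg, hc, one_def, mul_one]
  congr 1
  abel

end WeightLattice

theorem demazure_one_and_idempotent_general {M : Type*} [AddCommGroup M]
    [Module.Free ℤ M]
    (α : M) (hα : α ≠ 0) (c : M →+ ℤ) (hc : c α = 2)
    (δ : AddMonoidAlgebra ℤ M →ₗ[ℤ] AddMonoidAlgebra ℤ M)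
    (hδ : ∀ u : AddMonoidAlgebra ℤ M,
      (1 - single (-α) 1) * δ u = u - single (-α) 1 * demazureReflectionAlg α c u) :
    δ 1 = 1 ∧ ∀ u : AddMonoidAlgebra ℤ M, δ (δ u) = δ u := by
  have := Module.Free.uniqueSums ℤ M
  have hE1 : (single (-α) 1 : AddMonoidAlgebra ℤ M) ≠ 1 := single_ne_one (neg_ne_zero.2 hα)
  have hδ_fixed := apply_eq_self_of_map_eq_self δ hδ hE1
  exact ⟨hδ_fixed (map_one _), fun u => hδ_fixed <|
    map_eq_self_of_one_sub_mul_eq (demazureReflectionAlg_involutive hc)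
      (single_neg_mul_demazureReflectionAlg_single_neg hc) hE1 (hδ u)⟩

/-- The Demazure operator satisfies δ(1) = 1 and δ ∘ δ = δ. -/
theorem demazure_one_and_idempotent {M : Type*} [AddCommGroup M]
    [Module.Free ℤ M] [Module.Finite ℤ M]
    (α : M) (hα : α ≠ 0) (c : M →+ ℤ) (hc : c α = 2)
    (δ : AddMonoidAlgebra ℤ M →ₗ[ℤ] AddMonoidAlgebra ℤ M)
    (hδ : ∀ u : AddMonoidAlgebra ℤ M,
      (1 - single (-α) 1) * δ u = u - single (-α) 1 * demazureReflectionAlg α c u) :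
    δ 1 = 1 ∧ ∀ u : AddMonoidAlgebra ℤ M, δ (δ u) = δ u :=
  demazure_one_and_idempotent_general α hα c hc δ hδ
end
end

section
/- The operator δ'(u) = e^α·(δ(u) − u) satisfies the twisted product rule δ'(u·v) = δ'(u)·v + s(u)·δ'(v) for all u, v ∈ ℤ[M]. -/
open AddMonoidAlgebra

noncomputable section

/-! Write `t = e^{-α}` and `a = e^α = t⁻¹`. Since `M` is torsion-free, `ℤ[M]` is a domain, so
`1 - t` is cancellable and the relation `(1 - t) δ(u) = u - t s(u)` determines `δ`. The element
`δ(u) v + s(u) δ(v) - s(u) v` satisfies that relation for `uv`, hence equals `δ(uv)`. Multiplying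
the relation by `a` gives `a (δ(u) - u) = δ(u) - s(u)`, and the twisted product rule for
`δ(u) - s(u)` is a ring identity. -/

section TwistedLeibniz

variable {R : Type*} [CommRing R] (s : R →+* R) {t : R} {δ : R → R}
  (hδ : ∀ u, (1 - t) * δ u = u - t * s u)

include hδ

theorem demazure_map_mul (ht : IsLeftRegular (1 - t)) (u v : R) :
    δ (u * v) = δ u * v + s u * δ v - s u * v :=
  ht <| by linear_combination hδ (u * v) - v * hδ u - s u * hδ v - t * map_mul s u v

theorem mul_demazure_sub_self {a : R} (hat : a * t = 1) (u : R) :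
    a * (δ u - u) = δ u - s u := by
  linear_combination a * hδ u + (δ u - s u) * hat

theorem demazure_twisted_leibniz {a : R} (hat : a * t = 1) (ht : IsLeftRegular (1 - t))
    (u v : R) :
    a * (δ (u * v) - u * v) = a * (δ u - u) * v + s u * (a * (δ v - v)) := by
  rw [mul_demazure_sub_self s hδ hat, mul_demazure_sub_self s hδ hat,
    mul_demazure_sub_self s hδ hat, demazure_map_mul s hδ ht, map_mul]
  ring

end TwistedLeibniz

theorem AddMonoidAlgebra.one_sub_single_ne_zero {R M : Type*} [Ring R] [Nontrivial R]
    [AddMonoid M] {a : M} (ha : a ≠ 0) : (1 - single a 1 : AddMonoidAlgebra R M) ≠ 0 := by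
  rw [sub_ne_zero, one_def, ne_eq, AddMonoidAlgebra.single_left_inj one_ne_zero]
  exact ha.symm

theorem demazure_prime_twisted_product_general {M : Type*} [AddCommGroup M]
    [Module.Free ℤ M]
    (α : M) (hα : α ≠ 0) (c : M →+ ℤ)
    (δ : AddMonoidAlgebra ℤ M →ₗ[ℤ] AddMonoidAlgebra ℤ M)
    (hδ : ∀ u : AddMonoidAlgebra ℤ M,
      (1 - single (-α) 1) * δ u = u - single (-α) 1 * demazureReflectionAlg α c u) :
    ∀ u v : AddMonoidAlgebra ℤ M,
      single α 1 * (δ (u * v) - u * v) =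
        (single α 1 * (δ u - u)) * v +
          demazureReflectionAlg α c u * (single α 1 * (δ v - v)) := by
  have := Module.Free.uniqueSums ℤ M
  have hat : (single α 1 : AddMonoidAlgebra ℤ M) * single (-α) 1 = 1 := by
    rw [single_mul_single, add_neg_cancel, mul_one, one_def]
  exact demazure_twisted_leibniz _ hδ hat
    (IsRegular.of_ne_zero' (one_sub_single_ne_zero (neg_ne_zero.mpr hα))).left

/-- Twisted product rule: δ'(uv) = δ'(u) v + s(u) δ'(v), where δ'(u) = e^α (δ(u) - u). -/
theorem demazure_prime_twisted_product {M : Type*} [AddCommGroup M]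
    [Module.Free ℤ M] [Module.Finite ℤ M]
    (α : M) (hα : α ≠ 0) (c : M →+ ℤ) (hc : c α = 2)
    (δ : AddMonoidAlgebra ℤ M →ₗ[ℤ] AddMonoidAlgebra ℤ M)
    (hδ : ∀ u : AddMonoidAlgebra ℤ M,
      (1 - single (-α) 1) * δ u = u - single (-α) 1 * demazureReflectionAlg α c u) :
    ∀ u v : AddMonoidAlgebra ℤ M,
      single α 1 * (δ (u * v) - u * v) =
        (single α 1 * (δ u - u)) * v +
          demazureReflectionAlg α c u * (single α 1 * (δ v - v)) :=
  demazure_prime_twisted_product_general α hα c δ hδ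
end
end
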